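/- If a finite simplicial graph Γ admits no nontrivial graph automorphism, then the directed graph Λ(Γ) on the vertices of Γ, with a directed edge from v to w whenever w dominates v and w ≠ v, contains no directed cycles. -/

import Mathlib

/-!
Domination is a preorder, so a directed cycle of Λ(Γ) through `u` closes with a vertex `v ≠ u`
such that `u` and `v` dominate each other. Two such vertices have the same neighbours apart from
each other, hence the transposition of `u` and `v` is a nontrivial automorphism of Γ.
-/

/-- `w` dominates `v` in `Γ`: lk(v) ⊆ st(w). -/
def Dominates {V : Type*} (Γ : SimpleGraph V) (w v : V) : Prop :=
  Γ.neighborSet v ⊆ Γ.neighborSet w ∪ {w}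

namespace Dominates

variable {V : Type*} {Γ : SimpleGraph V}

lemma adj {w v x : V} (h : Dominates Γ w v) (hx : Γ.Adj v x) : Γ.Adj w x ∨ x = w := h hx

lemma refl (v : V) : Dominates Γ v v := Set.subset_union_left

lemma trans {x w v : V} (hxw : Dominates Γ x w) (hwv : Dominates Γ w v) :
    Dominates Γ x v := by
  intro u hu
  rcases hwv.adj hu with hwu | rfl
  · exact hxw hwu
  · rcases hxw.adj hu.symm with hxv | rfl
    · rcases hwv.adj hxv.symm with hwx | rfl
      · exact Or.inl hwx.symm
      · exact Or.inr rfl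
    · exact Or.inl hu

lemma of_reflTransGen {u v : V}
    (h : Relation.ReflTransGen (fun x y : V => y ≠ x ∧ Dominates Γ y x) u v) :
    Dominates Γ v u := by
  induction h with
  | refl => exact refl u
  | tail _ hstep ih => exact hstep.2.trans ih

lemma adj_swap [DecidableEq V] {z u : V} (hzu : Dominates Γ z u) (huz : Dominates Γ u z)
    {a b : V} (hab : Γ.Adj a b) : Γ.Adj (Equiv.swap z u a) (Equiv.swap z u b) := by
  have hz : ∀ x, Γ.Adj u x → Γ.Adj z x ∨ x = z := fun _ => hzu.adj
  have hu : ∀ x, Γ.Adj z x → Γ.Adj u x ∨ x = u := fun _ => huz.adj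
  have hne := hab.ne
  simp only [Equiv.swap_apply_def]
  split_ifs <;> subst_vars <;> grind [SimpleGraph.Adj.symm]

end Dominates

def SimpleGraph.Iso.swapOfDominates {V : Type*} [DecidableEq V] {Γ : SimpleGraph V} {z u : V}
    (hzu : Dominates Γ z u) (huz : Dominates Γ u z) : Γ ≃g Γ where
  toEquiv := Equiv.swap z u
  map_rel_iff' := ⟨fun h => by simpa using hzu.adj_swap huz h, hzu.adj_swap huz⟩

theorem no_automorphism_implies_acyclic_general {V : Type*} (Γ : SimpleGraph V)
    (h : ∀ e : Γ ≃g Γ, e.toEquiv = Equiv.refl V) :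
    ∀ u : V, ¬ Relation.TransGen (fun x y : V => y ≠ x ∧ Dominates Γ y x) u u := by
  classical
  intro u hcycle
  obtain ⟨v, hpath, hne, hdom⟩ := Relation.TransGen.tail'_iff.mp hcycle
  have hswap := DFunLike.congr_fun
    (h (.swapOfDominates (Dominates.of_reflTransGen hpath) hdom)) v
  exact hne (by simpa [SimpleGraph.Iso.swapOfDominates] using hswap)

/-- if Γ has no nontrivial automorphism, then the domination digraph
Λ(Γ) (edge v → w when w ≠ v and w dominates v) has no directed cycles. -/
theorem no_automorphism_implies_acyclic {V : Type*} [Fintype V] (Γ : SimpleGraph V)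
    (h : ∀ e : Γ ≃g Γ, e.toEquiv = Equiv.refl V) :
    ∀ u : V, ¬ Relation.TransGen (fun x y : V => y ≠ x ∧ Dominates Γ y x) u u :=
  no_automorphism_implies_acyclic_general Γ h
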